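/- arXiv:2502.06399 — 2 statements merged into one kernel-verified Lean document; each statement's English description precedes it below -/
import Mathlib

section
/- Let α ∈ (1, ∞), let A_1, …, A_n be density matrices in ℂ^{d×d} with ∑_{j=1}^n A_j positive definite, let w[1], …, w[n] > 0 with ∑_{j=1}^n w[j] = 1, set F(Q) := ∑_{j=1}^n w[j] D_α(A_j ‖ Q), and define T_F(U) := ( ∑_{j=1}^n w[j] · A_j^α / Tr[A_j^α U] )^{(1−α)/α} for positive definite Hermitian U. Then for any positive definite Hermitian Q ∈ ℂ^{d×d} with Tr[Q] ≤ 1, F( T_F(Q^{1−α})^{1/(1−α)} ) ≤ F(Q), with equality if and only if Q^{1−α} is a fixed point of T_F. -/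
open scoped ComplexOrder
open Matrix

noncomputable section

/-- Real power of a matrix via the functional calculus (spectral decomposition);
junk value `A` if `A` is not Hermitian. -/
noncomputable def mpow {d : ℕ} (A : Matrix (Fin d) (Fin d) ℂ) (r : ℝ) :
    Matrix (Fin d) (Fin d) ℂ :=
  if hA : A.IsHermitian then
    (hA.eigenvectorUnitary : Matrix (Fin d) (Fin d) ℂ) *
      Matrix.diagonal (fun i => ((hA.eigenvalues i ^ r : ℝ) : ℂ)) *
      star (hA.eigenvectorUnitary : Matrix (Fin d) (Fin d) ℂ)
  else A

/-- The Loewner order: `A ⪯ B` iff `B - A` is positive semidefinite. -/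
def loewnerLE {d : ℕ} (A B : Matrix (Fin d) (Fin d) ℂ) : Prop := (B - A).PosSemidef

/-- Thompson metric on positive definite matrices (extended-real valued):
`inf { r ≥ 0 | exp (-r) • V ⪯ U ⪯ exp r • V }`, equal to `⊤` if no such `r` exists. -/
noncomputable def dTmat {d : ℕ} (V U : Matrix (Fin d) (Fin d) ℂ) : EReal :=
  sInf {x : EReal | ∃ r : ℝ, 0 ≤ r ∧ x = (r : EReal) ∧
    loewnerLE (Real.exp (-r) • V) U ∧ loewnerLE U (Real.exp r • V)}

open Classical in
/-- Thompson metric on entrywise-positive vectors (extended-real valued):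
`max_i |log (v i / u i)|`. -/
noncomputable def dTvec {d : ℕ} (v u : Fin d → ℝ) : EReal :=
  (⨆ i, if 0 < v i ∧ 0 < u i then ((|Real.log (v i / u i)| : ℝ) : EReal) else (⊤ : EReal)) ⊔ 0

/-- A density matrix: Hermitian positive semidefinite with unit trace. -/
def IsDensityMatrix {d : ℕ} (A : Matrix (Fin d) (Fin d) ℂ) : Prop :=
  A.PosSemidef ∧ A.trace = 1

/-- The operator `T_F (U) = (∑ j, w j • A j ^ α / Tr[A j ^ α * U]) ^ ((1 - α)/α)`. -/
noncomputable def TF {n d : ℕ} (w : Fin n → ℝ) (A : Fin n → Matrix (Fin d) (Fin d) ℂ)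
    (α : ℝ) (U : Matrix (Fin d) (Fin d) ℂ) : Matrix (Fin d) (Fin d) ℂ :=
  mpow (∑ j, ((w j : ℂ) / Matrix.trace (mpow (A j) α * U)) • mpow (A j) α) ((1 - α) / α)

/-- The Petz–Rényi divergence of order `α` (real-valued version, intended for
positive definite `Q`): `(α - 1)⁻¹ * log Tr[A^α * Q^(1-α)]`. -/
noncomputable def petzRenyi {d : ℕ} (α : ℝ) (A Q : Matrix (Fin d) (Fin d) ℂ) : ℝ :=
  (α - 1)⁻¹ * Real.log (Matrix.trace (mpow A α * mpow Q (1 - α))).re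

open Classical in
/-- The Petz–Rényi divergence of order `α`, extended-real valued; `⊤` whenever the
defining formula is not well-defined. -/
noncomputable def petzRenyiE {d : ℕ} (α : ℝ) (A Q : Matrix (Fin d) (Fin d) ℂ) : EReal :=
  if 0 < (Matrix.trace (mpow A α * mpow Q (1 - α))).re ∧
      (1 < α → ∀ x : Fin d → ℂ, Q.mulVec x = 0 → A.mulVec x = 0) then
    (((α - 1)⁻¹ * Real.log (Matrix.trace (mpow A α * mpow Q (1 - α))).re : ℝ) : EReal)
  else ⊤

/-- The objective `F(Q) = ∑ j, w j * D_α(A j ‖ Q)`, extended-real valued. -/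
noncomputable def FE {n d : ℕ} (w : Fin n → ℝ) (A : Fin n → Matrix (Fin d) (Fin d) ℂ)
    (α : ℝ) (Q : Matrix (Fin d) (Fin d) ℂ) : EReal :=
  ∑ j, ((w j : ℝ) : EReal) * petzRenyiE α (A j) Q

/-- Membership in the probability simplex `Δ_d`. -/
def memSimplex {d : ℕ} (q : Fin d → ℝ) : Prop := (∀ i, 0 ≤ q i) ∧ ∑ i, q i = 1

/-- The classical operator `T_f (u) = (∑ j, w j • a j ^ α / ⟨a j ^ α, u⟩) ^ ((1 - α)/α)`,
entrywise. -/
noncomputable def Tf {n d : ℕ} (w : Fin n → ℝ) (a : Fin n → Fin d → ℝ) (α : ℝ)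
    (u : Fin d → ℝ) : Fin d → ℝ :=
  fun i => (∑ j, w j * (a j i ^ α) / (∑ k, (a j k ^ α) * u k)) ^ ((1 - α) / α)

open Classical in
/-- The classical Rényi divergence term, extended-real valued; `⊤` whenever the
defining formula is not well-defined. -/
noncomputable def petzVecE {d : ℕ} (α : ℝ) (a q : Fin d → ℝ) : EReal :=
  if 0 < (∑ i, a i ^ α * q i ^ (1 - α)) ∧ (1 < α → ∀ i, q i = 0 → a i = 0) then
    (((α - 1)⁻¹ * Real.log (∑ i, a i ^ α * q i ^ (1 - α)) : ℝ) : EReal)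
  else ⊤

/-- The classical objective `f(q) = ∑ j, w j * (α-1)⁻¹ * log (∑ i, (a j i)^α * (q i)^(1-α))`,
real-valued version (intended for entrywise positive `q`). -/
noncomputable def fcl {n d : ℕ} (w : Fin n → ℝ) (a : Fin n → Fin d → ℝ) (α : ℝ)
    (q : Fin d → ℝ) : ℝ :=
  ∑ j, w j * ((α - 1)⁻¹ * Real.log (∑ i, a j i ^ α * q i ^ (1 - α)))

/-- Total CES demand in a Fisher market at prices `p`. -/
noncomputable def demand {n d : ℕ} (w : Fin n → ℝ) (a : Fin n → Fin d → ℝ)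
    (ρ : Fin n → ℝ) (p : Fin d → ℝ) : Fin d → ℝ :=
  fun i => ∑ j, w j * (a j i ^ (1 / (1 - ρ j)) * p i ^ (-(1 / (1 - ρ j)))) /
    (∑ k, a j k ^ (1 / (1 - ρ j)) * p k ^ (-(ρ j / (1 - ρ j))))

/-!
Put `B = Q^(1-α)`, `c_j = Tr[A_j^α B]` and `S = ∑_j (w_j / c_j) A_j^α`, so that
`T_F(B) = S^((1-α)/α)` and the new iterate is `Q' = S^(1/α)`. With `e_j = Tr[A_j^α S^((1-α)/α)]`,
the inequality `log x ≤ x - 1` gives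
`(α - 1) (F(Q') - F(Q)) = ∑_j w_j log (e_j / c_j) ≤ ∑_j w_j e_j / c_j - 1 = Tr[S^(1/α)] - 1`.
By the trace Young inequality `Tr[S^(1/α)] ≤ α⁻¹ Tr[S Q^(1-α)] + (1 - α⁻¹) Tr[Q]`, together with
`Tr[S Q^(1-α)] = ∑_j w_j = 1` and `Tr[Q] ≤ 1`, the right-hand side is at most `0`.
The Young inequality is proved in the eigenbases `U` of `S` and `V` of `Q`: the squared moduli of
the entries of `U* V` form a doubly stochastic matrix, which reduces it to the scalar weighted
AM-GM inequality, one entry at a time. Equality forces equality in every scalar step with a nonzero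
weight, which means `Q = S^(1/α)`, i.e. `Q^(1-α) = S^((1-α)/α) = T_F(Q^(1-α))`.
-/

namespace Matrix

variable {m : Type*} [Fintype m]

lemma posDef_sum_smul_of_mulVec_eq_zero {ι : Type*} [Fintype ι]
    {M N : ι → Matrix m m ℂ} {c : ι → ℂ} (hc : ∀ j, 0 < c j) (hM : ∀ j, (M j).PosSemidef)
    (hMN : ∀ j x, M j *ᵥ x = 0 → N j *ᵥ x = 0) (hN : (∑ j, N j).PosDef) :
    (∑ j, c j • M j).PosDef := by
  have hS : (∑ j, c j • M j).PosSemidef := posSemidef_sum _ fun j _ => (hM j).smul (hc j).le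
  refine .of_dotProduct_mulVec_pos hS.1 fun x hx =>
    (hS.dotProduct_mulVec_nonneg x).lt_of_ne fun h0 => ?_
  rw [sum_mulVec, dotProduct_sum, eq_comm, Finset.sum_eq_zero_iff_of_nonneg fun j _ => by
    rw [smul_mulVec, dotProduct_smul, smul_eq_mul]
    exact mul_nonneg (hc j).le ((hM j).dotProduct_mulVec_nonneg x)] at h0
  have hNx : (∑ j, N j) *ᵥ x = 0 := by
    rw [sum_mulVec]
    refine Finset.sum_eq_zero fun j hj => hMN j x (((hM j).dotProduct_mulVec_zero_iff x).mp ?_)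
    have := h0 j hj
    rw [smul_mulVec, dotProduct_smul, smul_eq_mul] at this
    exact (mul_eq_zero.mp this).resolve_left (hc j).ne'
  have := hN.dotProduct_mulVec_pos hx
  rw [hNx, dotProduct_zero] at this
  exact lt_irrefl _ this

variable [DecidableEq m]

lemma IsHermitian.eq_conj_diagonal {A : Matrix m m ℂ} (hA : A.IsHermitian) :
    A = (hA.eigenvectorUnitary : Matrix m m ℂ) * diagonal (fun i => (hA.eigenvalues i : ℂ)) *
      star (hA.eigenvectorUnitary : Matrix m m ℂ) := by
  conv_lhs => rw [hA.spectral_theorem, Unitary.conjStarAlgAut_apply]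
  rfl

lemma trace_unitary_conj_diagonal {U : Matrix m m ℂ} (hU : U ∈ unitaryGroup m ℂ) (a : m → ℝ) :
    (U * diagonal (fun i => (a i : ℂ)) * star U).trace = ((∑ i, a i : ℝ) : ℂ) := by
  rw [trace_mul_cycle, Unitary.star_mul_self_of_mem hU, one_mul, trace_diagonal,
    Complex.ofReal_sum]

lemma sum_normSq_row_eq_one {W : Matrix m m ℂ} (hW : W ∈ unitaryGroup m ℂ) (i : m) :
    ∑ k, Complex.normSq (W i k) = 1 := by
  have h : (W * star W) i i = (1 : Matrix m m ℂ) i i := by rw [Unitary.mul_star_self_of_mem hW]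
  simp only [mul_apply, star_apply, one_apply_eq, RCLike.star_def, Complex.mul_conj] at h
  exact_mod_cast h

lemma sum_normSq_col_eq_one {W : Matrix m m ℂ} (hW : W ∈ unitaryGroup m ℂ) (k : m) :
    ∑ i, Complex.normSq (W i k) = 1 := by
  have h : (star W * W) k k = (1 : Matrix m m ℂ) k k := by rw [Unitary.star_mul_self_of_mem hW]
  simp only [mul_apply, star_apply, one_apply_eq, RCLike.star_def, mul_comm (starRingEnd ℂ _),
    Complex.mul_conj] at h
  exact_mod_cast h

lemma trace_unitary_conj_diagonal_mul {U V : Matrix m m ℂ} (hU : U ∈ unitaryGroup m ℂ)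
    (a b : m → ℝ) :
    ((U * diagonal (fun i => (a i : ℂ)) * star U) *
        (V * diagonal (fun i => (b i : ℂ)) * star V)).trace =
      ((∑ i, ∑ k, a i * b k * Complex.normSq ((star U * V) i k) : ℝ) : ℂ) := by
  set W := star U * V with hW
  have hconj : (U * diagonal (fun i => (a i : ℂ)) * star U) *
        (V * diagonal (fun i => (b i : ℂ)) * star V) =
      U * (diagonal (fun i => (a i : ℂ)) * W * diagonal (fun i => (b i : ℂ)) * star W) *
        star U := by
    simp only [hW, star_mul, star_star, mul_assoc, Unitary.mul_star_self_of_mem hU, mul_one]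
  rw [hconj, trace_mul_cycle, ← mul_assoc, Unitary.star_mul_self_of_mem hU, one_mul, trace]
  push_cast
  refine Finset.sum_congr rfl fun i _ => ?_
  rw [diag_apply, mul_apply]
  refine Finset.sum_congr rfl fun k _ => ?_
  simp only [diagonal_mul, mul_diagonal, star_apply, RCLike.star_def]
  rw [← Complex.mul_conj]
  ring

lemma unitary_conj_diagonal_eq_of_forall {U V : Matrix m m ℂ} (hU : U ∈ unitaryGroup m ℂ)
    (hV : V ∈ unitaryGroup m ℂ) {a b : m → ℝ}
    (h : ∀ i k, (star U * V) i k ≠ 0 → a i = b k) :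
    U * diagonal (fun i => (a i : ℂ)) * star U = V * diagonal (fun i => (b i : ℂ)) * star V := by
  have hcomm : diagonal (fun i => (a i : ℂ)) * (star U * V) =
      (star U * V) * diagonal (fun i => (b i : ℂ)) := by
    ext i k
    simp only [diagonal_mul, mul_diagonal]
    by_cases hik : (star U * V) i k = 0
    · simp [hik]
    · rw [h i k hik, mul_comm]
  calc U * diagonal (fun i => (a i : ℂ)) * star U
      = U * (diagonal (fun i => (a i : ℂ)) * (star U * V)) * star V := by
        simp only [mul_assoc, Unitary.mul_star_self_of_mem hV, mul_one]
    _ = _ := by rw [hcomm, ← mul_assoc, ← mul_assoc, Unitary.mul_star_self_of_mem hU, one_mul]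

open scoped MatrixOrder in
lemma PosSemidef.nonneg_of_mem_spectrum {A : Matrix m m ℂ} (hA : A.PosSemidef) {x : ℝ}
    (hx : x ∈ spectrum ℝ A) : 0 ≤ x :=
  spectrum_nonneg_of_nonneg hA.nonneg hx

lemma PosSemidef.trace_mul_posDef_pos {A P : Matrix m m ℂ} (hA : A.PosSemidef) (hA0 : A ≠ 0)
    (hP : P.PosDef) : 0 < (A * P).trace := by
  set U : Matrix m m ℂ := (hA.1.eigenvectorUnitary : Matrix m m ℂ)
  have hUP : (star U * P * U).PosDef :=
    (IsUnit.posDef_star_left_conjugate_iff Unitary.isUnit_coe).mpr hP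
  obtain ⟨i, hi⟩ := Function.ne_iff.mp fun h => hA0 (hA.1.eigenvalues_eq_zero_iff.mp h)
  have htrace : (A * P).trace = ∑ i, (hA.1.eigenvalues i : ℂ) * (star U * P * U) i i := by
    conv_lhs => rw [hA.1.eq_conj_diagonal]
    rw [mul_assoc, mul_assoc, trace_mul_comm, mul_assoc, trace]
    simp only [diag_apply, diagonal_mul, U]
  rw [htrace]
  refine Finset.sum_pos' (fun k _ => mul_nonneg ?_ hUP.diag_pos.le) ⟨i, Finset.mem_univ _, ?_⟩
  · exact_mod_cast hA.eigenvalues_nonneg k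
  · exact mul_pos (by exact_mod_cast (hA.eigenvalues_nonneg i).lt_of_ne' hi) hUP.diag_pos

end Matrix

namespace Real

variable {α x y : ℝ}

lemma young_geom_mean_eq (hα : α ≠ 0) (hx : 0 ≤ x) (hy : 0 < y) :
    (x * y ^ (1 - α)) ^ α⁻¹ * y ^ (1 - α⁻¹) = x ^ α⁻¹ := by
  rw [Real.mul_rpow hx (Real.rpow_nonneg hy.le _), ← Real.rpow_mul hy.le, mul_assoc,
    ← Real.rpow_add hy, show (1 - α) * α⁻¹ + (1 - α⁻¹) = 0 by field_simp; ring,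
    Real.rpow_zero, mul_one]

lemma rpow_inv_le_young (hα : 1 < α) (hx : 0 ≤ x) (hy : 0 < y) :
    x ^ α⁻¹ ≤ α⁻¹ * (x * y ^ (1 - α)) + (1 - α⁻¹) * y := by
  have hα' : α⁻¹ < 1 := inv_lt_one_of_one_lt₀ hα
  rw [← young_geom_mean_eq (by positivity) hx hy]
  exact Real.geom_mean_le_arith_mean2_weighted (by positivity) (by linarith)
    (mul_nonneg hx (Real.rpow_nonneg hy.le _)) hy.le (by ring)

lemma rpow_inv_eq_young_iff (hα : 1 < α) (hx : 0 ≤ x) (hy : 0 < y) :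
    x ^ α⁻¹ = α⁻¹ * (x * y ^ (1 - α)) + (1 - α⁻¹) * y ↔ y = x ^ α⁻¹ := by
  have hα' : α⁻¹ < 1 := inv_lt_one_of_one_lt₀ hα
  rw [← young_geom_mean_eq (by positivity) hx hy,
    Real.geom_mean_eq_arith_mean2_weighted_iff_of_pos (by positivity) (by linarith)
      (mul_nonneg hx (Real.rpow_nonneg hy.le _)) hy.le (by ring),
    young_geom_mean_eq (by positivity) hx hy, Real.eq_rpow_inv hy.le hx (by positivity),
    Real.rpow_sub hy, Real.rpow_one, mul_div_assoc', div_eq_iff (by positivity)]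
  constructor <;> intro h
  · exact (mul_right_cancel₀ hy.ne' (h.trans (mul_comm _ _))).symm
  · rw [h, mul_comm]

lemma sum_mul_log_sub_log_le {ι : Type*} [Fintype ι] {w c e : ι → ℝ} (hw : ∀ j, 0 ≤ w j)
    (hc : ∀ j, 0 < c j) (he : ∀ j, 0 < e j) :
    ∑ j, w j * (Real.log (e j) - Real.log (c j)) ≤ ∑ j, w j / c j * e j - ∑ j, w j := by
  rw [← Finset.sum_sub_distrib]
  refine Finset.sum_le_sum fun j _ => ?_
  calc w j * (Real.log (e j) - Real.log (c j)) = w j * Real.log (e j / c j) := by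
        rw [Real.log_div (he j).ne' (hc j).ne']
    _ ≤ w j * (e j / c j - 1) :=
        mul_le_mul_of_nonneg_left (Real.log_le_sub_one_of_pos (div_pos (he j) (hc j))) (hw j)
    _ = w j / c j * e j - w j := by field_simp [(hc j).ne']

end Real

lemma Complex.eq_ofReal_re_of_pos {z : ℂ} (hz : 0 < z) : z = z.re :=
  Complex.eq_re_of_ofReal_le (by exact_mod_cast hz.le)

open Matrix

section MatrixPower

variable {d : ℕ} {A P : Matrix (Fin d) (Fin d) ℂ}

lemma mpow_of_isHermitian (hA : A.IsHermitian) (r : ℝ) :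
    mpow A r = (hA.eigenvectorUnitary : Matrix (Fin d) (Fin d) ℂ) *
      diagonal (fun i => ((hA.eigenvalues i ^ r : ℝ) : ℂ)) *
      star (hA.eigenvectorUnitary : Matrix (Fin d) (Fin d) ℂ) :=
  dif_pos hA

lemma mpow_eq_cfc (hA : A.IsHermitian) (r : ℝ) : mpow A r = cfc (fun x : ℝ => x ^ r) A := by
  rw [hA.cfc_eq, IsHermitian.cfc, Unitary.conjStarAlgAut_apply, mpow_of_isHermitian hA]
  rfl

lemma mpow_posSemidef (hA : A.PosSemidef) (r : ℝ) : (mpow A r).PosSemidef := by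
  rw [mpow_of_isHermitian hA.1, IsUnit.posSemidef_star_right_conjugate_iff Unitary.isUnit_coe,
    posSemidef_diagonal_iff]
  exact fun i => by exact_mod_cast Real.rpow_nonneg (hA.eigenvalues_nonneg i) r

lemma mpow_posDef (hA : A.PosDef) (r : ℝ) : (mpow A r).PosDef := by
  rw [mpow_of_isHermitian hA.1, IsUnit.posDef_star_right_conjugate_iff Unitary.isUnit_coe,
    posDef_diagonal_iff]
  exact fun i => by exact_mod_cast Real.rpow_pos_of_pos (hA.eigenvalues_pos i) r

lemma mpow_ne_zero (hA : A.PosSemidef) (hA0 : A ≠ 0) (r : ℝ) : mpow A r ≠ 0 := by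
  obtain ⟨i, hi⟩ := Function.ne_iff.mp fun h => hA0 (hA.1.eigenvalues_eq_zero_iff.mp h)
  intro h0
  have htrace := trace_unitary_conj_diagonal hA.1.eigenvectorUnitary.2
    (fun i => hA.1.eigenvalues i ^ r)
  rw [← mpow_of_isHermitian hA.1, h0, trace_zero, eq_comm, Complex.ofReal_eq_zero,
    Finset.sum_eq_zero_iff_of_nonneg fun k _ => Real.rpow_nonneg (hA.eigenvalues_nonneg k) r]
    at htrace
  exact (Real.rpow_pos_of_pos ((hA.eigenvalues_nonneg i).lt_of_ne' hi) r).ne'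
    (htrace i (Finset.mem_univ _))

lemma mpow_mpow (hA : A.PosSemidef) (r s : ℝ) : mpow (mpow A r) s = mpow A (r * s) := by
  have hr : (cfc (fun x : ℝ => x ^ r) A).IsHermitian := cfc_predicate _ A
  rw [mpow_eq_cfc hA.1, mpow_eq_cfc hr, mpow_eq_cfc hA.1]
  refine (cfc_comp' (fun x : ℝ => x ^ s) (fun x : ℝ => x ^ r) A
      ((A.finite_real_spectrum.image _).continuousOn _) (A.finite_real_spectrum.continuousOn _)
      hA.1).symm.trans (cfc_congr fun x hx => ?_)
  exact (Real.rpow_mul (hA.nonneg_of_mem_spectrum hx) r s).symm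

lemma mpow_one (hA : A.IsHermitian) : mpow A 1 = A := by
  rw [mpow_eq_cfc hA]
  exact (cfc_congr fun x _ => Real.rpow_one x).trans (cfc_id' ℝ A hA)

lemma mul_mpow (hA : A.PosSemidef) {r : ℝ} (hr : 1 + r ≠ 0) : A * mpow A r = mpow A (1 + r) := by
  rw [mpow_eq_cfc hA.1, mpow_eq_cfc hA.1]
  nth_rewrite 1 [← cfc_id' ℝ A hA.1]
  refine (cfc_mul _ _ A (A.finite_real_spectrum.continuousOn _)
    (A.finite_real_spectrum.continuousOn _)).symm.trans (cfc_congr fun x hx => ?_)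
  exact (Real.rpow_one_add' (hA.nonneg_of_mem_spectrum hx) hr).symm

lemma mulVec_eq_zero_of_mpow_mulVec_eq_zero (hA : A.PosSemidef) {r : ℝ} {x : Fin d → ℂ}
    (hx : mpow A r *ᵥ x = 0) : A *ᵥ x = 0 := by
  set U : Matrix (Fin d) (Fin d) ℂ := (hA.1.eigenvectorUnitary : Matrix (Fin d) (Fin d) ℂ)
  have hdiag : ∀ f : Fin d → ℂ,
      (U * diagonal f * star U) *ᵥ x = 0 ↔ ∀ i, f i * (star U *ᵥ x) i = 0 := by
    intro f
    rw [← mulVec_mulVec, ← mulVec_mulVec, ← mulVec_zero U,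
      (mulVec_injective_of_isUnit Unitary.isUnit_coe).eq_iff, funext_iff]
    simp only [mulVec_diagonal, Pi.zero_apply]
  rw [mpow_of_isHermitian hA.1, hdiag] at hx
  rw [hA.1.eq_conj_diagonal, hdiag]
  intro i
  rcases mul_eq_zero.mp (hx i) with h | h
  · rw [Complex.ofReal_eq_zero, Real.rpow_eq_zero_iff_of_nonneg (hA.eigenvalues_nonneg i)] at h
    simp [h.1]
  · simp [h]

lemma mpow_mpow_inv (hA : A.PosSemidef) {r : ℝ} (hr : r ≠ 0) : mpow (mpow A r) r⁻¹ = A := by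
  rw [mpow_mpow hA, mul_inv_cancel₀ hr, mpow_one hA.1]

lemma IsDensityMatrix.ne_zero (hA : IsDensityMatrix A) : A ≠ 0 := by
  rintro rfl
  simpa using hA.2

lemma IsDensityMatrix.trace_mpow_mul_pos (hA : IsDensityMatrix A) (hP : P.PosDef) (r : ℝ) :
    0 < (mpow A r * P).trace :=
  (mpow_posSemidef hA.1 r).trace_mul_posDef_pos (mpow_ne_zero hA.1 hA.ne_zero r) hP

end MatrixPower

section MatrixYoung

variable {d : ℕ} {α : ℝ} {S Q : Matrix (Fin d) (Fin d) ℂ}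

lemma young_gap_eq (hS : S.IsHermitian) (hQ : Q.IsHermitian) (α : ℝ) :
    α⁻¹ * (S * mpow Q (1 - α)).trace.re + (1 - α⁻¹) * Q.trace.re - (mpow S α⁻¹).trace.re =
      ∑ i, ∑ k, Complex.normSq ((star (hS.eigenvectorUnitary : Matrix (Fin d) (Fin d) ℂ) *
          (hQ.eigenvectorUnitary : Matrix (Fin d) (Fin d) ℂ)) i k) *
        (α⁻¹ * (hS.eigenvalues i * hQ.eigenvalues k ^ (1 - α)) + (1 - α⁻¹) * hQ.eigenvalues k -
          hS.eigenvalues i ^ α⁻¹) := by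
  set U : Matrix (Fin d) (Fin d) ℂ := (hS.eigenvectorUnitary : Matrix (Fin d) (Fin d) ℂ)
  set V : Matrix (Fin d) (Fin d) ℂ := (hQ.eigenvectorUnitary : Matrix (Fin d) (Fin d) ℂ)
  set s := hS.eigenvalues
  set q := hQ.eigenvalues
  set p := fun i k => Complex.normSq ((star U * V) i k)
  have hW : star U * V ∈ unitaryGroup (Fin d) ℂ :=
    Submonoid.mul_mem _ (Unitary.star_mem hS.eigenvectorUnitary.2) hQ.eigenvectorUnitary.2
  have hSQ : (S * mpow Q (1 - α)).trace.re = ∑ i, ∑ k, s i * q k ^ (1 - α) * p i k := by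
    rw [mpow_of_isHermitian hQ, hS.eq_conj_diagonal,
      trace_unitary_conj_diagonal_mul hS.eigenvectorUnitary.2, Complex.ofReal_re]
  have hQtr : Q.trace.re = ∑ i, ∑ k, p i k * q k := by
    rw [Finset.sum_comm, hQ.eq_conj_diagonal, trace_unitary_conj_diagonal hQ.eigenvectorUnitary.2,
      Complex.ofReal_re]
    exact Finset.sum_congr rfl fun k _ => by
      rw [← Finset.sum_mul, sum_normSq_col_eq_one hW, one_mul]
  have hStr : (mpow S α⁻¹).trace.re = ∑ i, ∑ k, p i k * s i ^ α⁻¹ := by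
    rw [mpow_of_isHermitian hS, trace_unitary_conj_diagonal hS.eigenvectorUnitary.2,
      Complex.ofReal_re]
    exact Finset.sum_congr rfl fun i _ => by
      rw [← Finset.sum_mul, sum_normSq_row_eq_one hW, one_mul]
  rw [hSQ, hQtr, hStr, Finset.mul_sum, Finset.mul_sum, ← Finset.sum_add_distrib,
    ← Finset.sum_sub_distrib]
  refine Finset.sum_congr rfl fun i _ => ?_
  rw [Finset.mul_sum, Finset.mul_sum, ← Finset.sum_add_distrib, ← Finset.sum_sub_distrib]
  exact Finset.sum_congr rfl fun k _ => by ring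

lemma young_gap_term_nonneg (hα : 1 < α) (hS : S.PosSemidef) (hQ : Q.PosDef) (i k : Fin d) :
    0 ≤ α⁻¹ * (hS.1.eigenvalues i * hQ.1.eigenvalues k ^ (1 - α)) +
      (1 - α⁻¹) * hQ.1.eigenvalues k - hS.1.eigenvalues i ^ α⁻¹ :=
  sub_nonneg.mpr (Real.rpow_inv_le_young hα (hS.eigenvalues_nonneg i) (hQ.eigenvalues_pos k))

theorem re_trace_mpow_inv_le (hα : 1 < α) (hS : S.PosSemidef) (hQ : Q.PosDef) :
    (mpow S α⁻¹).trace.re ≤ α⁻¹ * (S * mpow Q (1 - α)).trace.re + (1 - α⁻¹) * Q.trace.re := by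
  have hgap := young_gap_eq hS.1 hQ.1 α
  have : 0 ≤ α⁻¹ * (S * mpow Q (1 - α)).trace.re + (1 - α⁻¹) * Q.trace.re -
      (mpow S α⁻¹).trace.re := hgap ▸ Finset.sum_nonneg fun i _ => Finset.sum_nonneg fun k _ =>
    mul_nonneg (Complex.normSq_nonneg _) (young_gap_term_nonneg hα hS hQ i k)
  linarith

theorem eq_mpow_inv_of_re_trace_mpow_inv_eq (hα : 1 < α) (hS : S.PosSemidef) (hQ : Q.PosDef)
    (h : (mpow S α⁻¹).trace.re =
      α⁻¹ * (S * mpow Q (1 - α)).trace.re + (1 - α⁻¹) * Q.trace.re) :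
    Q = mpow S α⁻¹ := by
  have hgap := young_gap_eq hS.1 hQ.1 α
  rw [← h, sub_self] at hgap
  have hrow := (Finset.sum_eq_zero_iff_of_nonneg fun i _ => Finset.sum_nonneg fun k _ =>
    mul_nonneg (Complex.normSq_nonneg _) (young_gap_term_nonneg hα hS hQ i k)).mp hgap.symm
  rw [mpow_of_isHermitian hS.1, hQ.1.eq_conj_diagonal]
  refine (unitary_conj_diagonal_eq_of_forall hS.1.eigenvectorUnitary.2
    hQ.1.eigenvectorUnitary.2 fun i k hik => ?_).symm
  have hterm := (Finset.sum_eq_zero_iff_of_nonneg fun k _ => mul_nonneg (Complex.normSq_nonneg _)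
    (young_gap_term_nonneg hα hS hQ i k)).mp (hrow i (Finset.mem_univ _)) k (Finset.mem_univ _)
  rcases mul_eq_zero.mp hterm with hW | hgap_ik
  · exact absurd (Complex.normSq_eq_zero.mp hW) hik
  · exact ((Real.rpow_inv_eq_young_iff hα (hS.eigenvalues_nonneg i) (hQ.eigenvalues_pos k)).mp
      (sub_eq_zero.mp hgap_ik).symm).symm

end MatrixYoung

section TF

variable {n d : ℕ} (w : Fin n → ℝ) (A : Fin n → Matrix (Fin d) (Fin d) ℂ) (α : ℝ)

def TFArg (U : Matrix (Fin d) (Fin d) ℂ) : Matrix (Fin d) (Fin d) ℂ :=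
  ∑ j, ((w j : ℂ) / (mpow (A j) α * U).trace) • mpow (A j) α

def weightedPetzRenyi (Q : Matrix (Fin d) (Fin d) ℂ) : ℝ :=
  ∑ j, w j * petzRenyi α (A j) Q

variable {w A α}

lemma trace_TFArg_mul (U P : Matrix (Fin d) (Fin d) ℂ) :
    (TFArg w A α U * P).trace =
      ∑ j, (w j : ℂ) / (mpow (A j) α * U).trace * (mpow (A j) α * P).trace := by
  simp only [TFArg, Finset.sum_mul, trace_sum, smul_mul_assoc, trace_smul, smul_eq_mul]

lemma TFArg_posDef (hA : ∀ j, IsDensityMatrix (A j)) (hApos : (∑ j, A j).PosDef)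
    (hw : ∀ j, 0 < w j) {U : Matrix (Fin d) (Fin d) ℂ} (hU : U.PosDef) :
    (TFArg w A α U).PosDef :=
  posDef_sum_smul_of_mulVec_eq_zero
    (fun j => div_pos (by exact_mod_cast hw j) ((hA j).trace_mpow_mul_pos hU α))
    (fun j => mpow_posSemidef (hA j).1 α)
    (fun j _ => mulVec_eq_zero_of_mpow_mulVec_eq_zero (hA j).1) hApos

lemma trace_TFArg_mul_self (hA : ∀ j, IsDensityMatrix (A j)) (hw1 : ∑ j, w j = 1)
    {U : Matrix (Fin d) (Fin d) ℂ} (hU : U.PosDef) : (TFArg w A α U * U).trace = 1 := by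
  rw [trace_TFArg_mul]
  simp_rw [div_mul_cancel₀ _ ((hA _).trace_mpow_mul_pos hU α).ne']
  exact_mod_cast hw1

end TF

section Descent

variable {n d : ℕ} {w : Fin n → ℝ} {A : Fin n → Matrix (Fin d) (Fin d) ℂ} {α : ℝ}
  {Q : Matrix (Fin d) (Fin d) ℂ}

lemma weightedPetzRenyi_TF_sub_le (hα : 1 < α) (hA : ∀ j, IsDensityMatrix (A j))
    (hApos : (∑ j, A j).PosDef) (hw : ∀ j, 0 < w j) (hQ : Q.PosDef) :
    weightedPetzRenyi w A α (mpow (TF w A α (mpow Q (1 - α))) (1 / (1 - α))) -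
        weightedPetzRenyi w A α Q ≤
      (α - 1)⁻¹ * ((mpow (TFArg w A α (mpow Q (1 - α))) α⁻¹).trace.re - ∑ j, w j) := by
  set B := mpow Q (1 - α)
  set S := TFArg w A α B
  set Y := TF w A α B
  have hB : B.PosDef := mpow_posDef hQ _
  have hS : S.PosDef := TFArg_posDef hA hApos hw hB
  have hY : Y.PosDef := mpow_posDef hS _
  set c := fun j => (mpow (A j) α * B).trace.re
  set e := fun j => (mpow (A j) α * Y).trace.re
  have hc := fun j => (hA j).trace_mpow_mul_pos hB α
  have he := fun j => (hA j).trace_mpow_mul_pos hY α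
  have hF : weightedPetzRenyi w A α (mpow Y (1 / (1 - α))) - weightedPetzRenyi w A α Q =
      (α - 1)⁻¹ * ∑ j, w j * (Real.log (e j) - Real.log (c j)) := by
    have hback : mpow (mpow Y (1 / (1 - α))) (1 - α) = Y := by
      simpa using mpow_mpow_inv hY.posSemidef (inv_ne_zero (by linarith : 1 - α ≠ 0))
    simp only [weightedPetzRenyi, petzRenyi, hback, Finset.mul_sum, ← Finset.sum_sub_distrib]
    exact Finset.sum_congr rfl fun j _ => by ring
  have hτ : (mpow S α⁻¹).trace.re = ∑ j, w j / c j * e j := by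
    have hexp : 1 + (1 - α) / α = α⁻¹ := by field_simp; ring
    have hSY : S * Y = mpow S α⁻¹ := hexp ▸ mul_mpow hS.posSemidef (hexp ▸ by positivity)
    have hcj : ∀ j, (mpow (A j) α * B).trace = (c j : ℂ) :=
      fun j => Complex.eq_ofReal_re_of_pos (hc j)
    have hej : ∀ j, (mpow (A j) α * Y).trace = (e j : ℂ) :=
      fun j => Complex.eq_ofReal_re_of_pos (he j)
    rw [← hSY, trace_TFArg_mul]
    simp only [hcj, hej]
    norm_cast
  rw [hF, hτ]
  exact mul_le_mul_of_nonneg_left (Real.sum_mul_log_sub_log_le (fun j => (hw j).le)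
    (fun j => (Complex.pos_iff.mp (hc j)).1) (fun j => (Complex.pos_iff.mp (he j)).1))
    (inv_nonneg.mpr (by linarith))

end Descent

/-- for `α > 1` and positive definite `Q` with `Tr[Q] ≤ 1`, the function
value is non-increasing along the iteration: `F(T_F(Q^(1-α))^(1/(1-α))) ≤ F(Q)`, with
equality iff `Q^(1-α)` is a fixed point of `T_F`. -/
theorem TF_fval_decrease {n d : ℕ} (α : ℝ) (hα : 1 < α)
    (A : Fin n → Matrix (Fin d) (Fin d) ℂ) (hA : ∀ j, IsDensityMatrix (A j))
    (hApos : (∑ j, A j).PosDef)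
    (w : Fin n → ℝ) (hw : ∀ j, 0 < w j) (hw1 : ∑ j, w j = 1)
    (Q : Matrix (Fin d) (Fin d) ℂ) (hQ : Q.PosDef) (hTr : Q.trace ≤ 1) :
    (∑ j, w j * petzRenyi α (A j) (mpow (TF w A α (mpow Q (1 - α))) (1 / (1 - α)))) ≤
        (∑ j, w j * petzRenyi α (A j) Q) ∧
      ((∑ j, w j * petzRenyi α (A j) (mpow (TF w A α (mpow Q (1 - α))) (1 / (1 - α)))) =
          (∑ j, w j * petzRenyi α (A j) Q) ↔
        TF w A α (mpow Q (1 - α)) = mpow Q (1 - α)) := by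
  set S := TFArg w A α (mpow Q (1 - α))
  have hS : S.PosDef := TFArg_posDef hA hApos hw (mpow_posDef hQ _)
  have hdesc := weightedPetzRenyi_TF_sub_le hα hA hApos hw hQ
  rw [hw1] at hdesc
  unfold weightedPetzRenyi at hdesc
  have hSB : (S * mpow Q (1 - α)).trace.re = 1 := by
    rw [trace_TFArg_mul_self hA hw1 (mpow_posDef hQ _), Complex.one_re]
  have hyoung := re_trace_mpow_inv_le hα hS.posSemidef hQ
  rw [hSB, mul_one] at hyoung
  have hTrQ : (1 - α⁻¹) * Q.trace.re ≤ 1 - α⁻¹ :=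
    mul_le_of_le_one_right (sub_nonneg.mpr (inv_le_one_of_one_le₀ hα.le)) (Complex.le_def.mp hTr).1
  have hτ : (mpow S α⁻¹).trace.re ≤ 1 := by linarith
  have hinv : 0 < (α - 1)⁻¹ := inv_pos.mpr (by linarith)
  refine ⟨?_, fun heq => ?_, fun hfix => ?_⟩
  · linarith [mul_nonpos_of_nonneg_of_nonpos hinv.le (sub_nonpos.mpr hτ)]
  · have hτ1 : 1 ≤ (mpow S α⁻¹).trace.re := by nlinarith
    have hQS : Q = mpow S α⁻¹ :=
      eq_mpow_inv_of_re_trace_mpow_inv_eq hα hS.posSemidef hQ (by rw [hSB]; linarith)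
    calc TF w A α (mpow Q (1 - α)) = mpow S ((1 - α) / α) := rfl
      _ = mpow (mpow S α⁻¹) (1 - α) := by rw [mpow_mpow hS.posSemidef]; ring_nf
      _ = mpow Q (1 - α) := by rw [← hQS]
  · rw [hfix, one_div, mpow_mpow_inv hQ.posSemidef (by linarith)]

end
end

section
/- Consider a Fisher market with n buyers and d goods, where each buyer j has budget w[j] > 0 with ∑_{j=1}^n w[j] = 1, utility weights a_j ∈ Δ_d with ∑_{j=1}^n a_j having all entries strictly positive, and elasticity ρ_j ∈ (0, 1). Let the total demand at prices p (entrywise positive) be x(p) := ∑_{j=1}^n w[j] · ( a_j^{1/(1−ρ_j)} ⊙ p^{−1/(1−ρ_j)} ) / ⟨ a_j^{1/(1−ρ_j)}, p^{−ρ_j/(1−ρ_j)} ⟩, and let p_⋆ be an entrywise positive price vector with x(p_⋆) = 1 (the all-ones vector). Let ρ̂_i ∈ [max_j ρ_j, 1) for each i, let p be entrywise positive, let ∅ ≠ I ⊆ {1,…,d}, and define p'[i] := p[i] · x(p)[i]^{1−ρ̂_i} for i ∈ I and p'[k] := p[k] for k ∉ I. Then d_T(p_⋆, p') ≤ d_T(p_⋆,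 p). -/
open scoped ComplexOrder
open Matrix

noncomputable section

/-! If `p ≤ λ q` entrywise, the numerator of a CES buyer's demand for good `i` scales exactly by
`(q i / p i)^{1/(1-ρ)}` and the denominator drops by at most `λ^{-ρ/(1-ρ)}`, so
`x(p)_i ≤ (λ q_i / p_i)^{1/(1-ρ̂)} λ⁻¹ x(q)_i`, using `λ q_i / p_i ≥ 1` to pass to the
largest exponent. Raising to `1 - ρ̂` makes the update `p_i x(p)_i^{1-ρ̂}` monotone and
subhomogeneous of degree `ρ̂`. The equilibrium `p_⋆` is a fixed point of the update, so comparing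
`p` and `p_⋆` with `λ = exp d_T(p_⋆, p)` in both directions bounds every updated coordinate by
`ρ̂ d_T(p_⋆, p)`. -/

open Real Finset

lemma abs_log_div_le_iff {x y r : ℝ} (hx : 0 < x) (hy : 0 < y) :
    |log (x / y)| ≤ r ↔ x ≤ exp r * y ∧ y ≤ exp r * x := by
  rw [abs_le, neg_le, ← log_inv, inv_div, log_le_iff_le_exp (div_pos hy hx),
    log_le_iff_le_exp (div_pos hx hy), div_le_iff₀ hx, div_le_iff₀ hy]
  exact and_comm

section Thompson

variable {d : ℕ} {v u : Fin d → ℝ}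

lemma dTvec_le_coe_iff (hv : ∀ i, 0 < v i) (hu : ∀ i, 0 < u i) {r : ℝ} (hr : 0 ≤ r) :
    dTvec v u ≤ r ↔ ∀ i, v i ≤ exp r * u i ∧ u i ≤ exp r * v i := by
  simp only [dTvec, sup_le_iff, iSup_le_iff, if_pos (And.intro (hv _) (hu _)),
    EReal.coe_le_coe_iff, ← abs_log_div_le_iff (hv _) (hu _)]
  exact and_iff_left (by exact_mod_cast hr)

lemma exists_dTvec_eq_coe (hv : ∀ i, 0 < v i) (hu : ∀ i, 0 < u i) :
    ∃ r : ℝ, 0 ≤ r ∧ dTvec v u = r := by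
  have h0 : 0 ≤ dTvec v u := le_sup_right
  have hfin : dTvec v u ≤ ((∑ i, |log (v i / u i)| : ℝ) : EReal) := by
    refine sup_le (iSup_le fun i => ?_) (by exact_mod_cast sum_nonneg fun i _ => abs_nonneg _)
    rw [if_pos ⟨hv i, hu i⟩, EReal.coe_le_coe_iff]
    exact single_le_sum (fun k _ => abs_nonneg (log (v k / u k))) (mem_univ i)
  exact ⟨(dTvec v u).toReal, EReal.toReal_nonneg h0,
    (EReal.coe_toReal (hfin.trans_lt (EReal.coe_lt_top _)).ne
      (EReal.bot_lt_zero.trans_le h0).ne').symm⟩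

end Thompson

section CES

variable {d : ℕ}

def cesDemand (α : Fin d → ℝ) (ρ : ℝ) (p : Fin d → ℝ) (i : Fin d) : ℝ :=
  α i ^ (1 / (1 - ρ)) * p i ^ (-(1 / (1 - ρ))) /
    ∑ k, α k ^ (1 / (1 - ρ)) * p k ^ (-(ρ / (1 - ρ)))

variable {α p q : Fin d → ℝ} {ρ lam : ℝ}

lemma cesDemand_nonneg (hα : ∀ k, 0 ≤ α k) (hp : ∀ k, 0 < p k) (i : Fin d) :
    0 ≤ cesDemand α ρ p i :=
  div_nonneg (mul_nonneg (rpow_nonneg (hα i) _) (rpow_nonneg (hp i).le _))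
    (sum_nonneg fun k _ => mul_nonneg (rpow_nonneg (hα k) _) (rpow_nonneg (hp k).le _))

lemma cesDemand_le (hα : ∀ k, 0 ≤ α k) (hρ0 : 0 ≤ ρ) (hρ1 : ρ < 1)
    (hp : ∀ k, 0 < p k) (hq : ∀ k, 0 < q k) (hpq : ∀ k, p k ≤ lam * q k) (i : Fin d) :
    cesDemand α ρ p i ≤ (lam * q i / p i) ^ (1 / (1 - ρ)) / lam * cesDemand α ρ q i := by
  have hsc : ρ / (1 - ρ) = 1 / (1 - ρ) - 1 := by field_simp [(sub_pos.2 hρ1).ne']; ring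
  have hs : 0 ≤ ρ / (1 - ρ) := div_nonneg hρ0 (sub_pos.2 hρ1).le
  unfold cesDemand
  set c := 1 / (1 - ρ)
  set s := ρ / (1 - ρ)
  have hlam : 0 < lam := pos_of_mul_pos_left ((hp i).trans_le (hpq i)) (hq i).le
  have hnum : α i ^ c * p i ^ (-c) =
      (lam * q i / p i) ^ c / lam ^ c * (α i ^ c * q i ^ (-c)) := by
    rw [div_rpow (mul_pos hlam (hq i)).le (hp i).le, mul_rpow hlam.le (hq i).le,
      rpow_neg (hp i).le, rpow_neg (hq i).le]
    have := rpow_pos_of_pos hlam c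
    have := rpow_pos_of_pos (hq i) c
    field_simp
  have hden : lam ^ (-s) * ∑ k, α k ^ c * q k ^ (-s) ≤ ∑ k, α k ^ c * p k ^ (-s) := by
    rw [mul_sum]
    refine sum_le_sum fun k _ => ?_
    calc lam ^ (-s) * (α k ^ c * q k ^ (-s)) = α k ^ c * (lam * q k) ^ (-s) := by
          rw [mul_rpow hlam.le (hq k).le]; ring
      _ ≤ α k ^ c * p k ^ (-s) := mul_le_mul_of_nonneg_left
          (rpow_le_rpow_of_nonpos (hp k) (hpq k) (neg_nonpos.2 hs)) (rpow_nonneg (hα k) c)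
  rcases (sum_nonneg fun k _ => mul_nonneg (rpow_nonneg (hα k) c)
    (rpow_nonneg (hq k).le (-s))).eq_or_lt with hDq | hDq
  · -- `x / 0 = 0` on the right; the vanishing denominator forces `α i = 0` on the left too.
    have hαi : α i ^ c = 0 := (mul_eq_zero.1 ((sum_eq_zero_iff_of_nonneg fun k _ =>
      mul_nonneg (rpow_nonneg (hα k) c) (rpow_nonneg (hq k).le (-s))).1 hDq.symm i
        (mem_univ i))).resolve_right (rpow_pos_of_pos (hq i) _).ne'
    simp [hαi]
  · calc α i ^ c * p i ^ (-c) / ∑ k, α k ^ c * p k ^ (-s)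
        ≤ α i ^ c * p i ^ (-c) / (lam ^ (-s) * ∑ k, α k ^ c * q k ^ (-s)) :=
          div_le_div_of_nonneg_left
            (mul_nonneg (rpow_nonneg (hα i) c) (rpow_nonneg (hp i).le _))
            (mul_pos (rpow_pos_of_pos hlam _) hDq) hden
      _ = _ := by
          rw [hnum, rpow_neg hlam.le, hsc, rpow_sub_one hlam.ne']
          field_simp

end CES

section Market

variable {n d : ℕ} {w : Fin n → ℝ} {a : Fin n → Fin d → ℝ} {ρ : Fin n → ℝ}
  {p q : Fin d → ℝ} {ρhat lam : ℝ}

lemma demand_eq_sum_cesDemand (i : Fin d) :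
    demand w a ρ p i = ∑ j, w j * cesDemand (a j) (ρ j) p i := by
  simp only [demand, cesDemand, mul_div_assoc]

lemma demand_nonneg (hw : ∀ j, 0 ≤ w j) (ha : ∀ j k, 0 ≤ a j k) (hp : ∀ k, 0 < p k)
    (i : Fin d) : 0 ≤ demand w a ρ p i := by
  rw [demand_eq_sum_cesDemand]
  exact sum_nonneg fun j _ => mul_nonneg (hw j) (cesDemand_nonneg (ha j) hp i)

lemma demand_le (hw : ∀ j, 0 ≤ w j) (ha : ∀ j k, 0 ≤ a j k)
    (hρ : ∀ j, 0 ≤ ρ j ∧ ρ j ≤ ρhat) (hρhat : ρhat < 1)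
    (hp : ∀ k, 0 < p k) (hq : ∀ k, 0 < q k) (hpq : ∀ k, p k ≤ lam * q k) (i : Fin d) :
    demand w a ρ p i ≤ (lam * q i / p i) ^ (1 / (1 - ρhat)) / lam * demand w a ρ q i := by
  have hlam : 0 < lam := pos_of_mul_pos_left ((hp i).trans_le (hpq i)) (hq i).le
  have hratio : 1 ≤ lam * q i / p i := (one_le_div (hp i)).2 (hpq i)
  simp only [demand_eq_sum_cesDemand, mul_sum]
  refine sum_le_sum fun j _ => ?_
  have hρj : ρ j < 1 := (hρ j).2.trans_lt hρhat
  calc w j * cesDemand (a j) (ρ j) p i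
      ≤ w j * ((lam * q i / p i) ^ (1 / (1 - ρ j)) / lam * cesDemand (a j) (ρ j) q i) :=
        mul_le_mul_of_nonneg_left (cesDemand_le (ha j) (hρ j).1 hρj hp hq hpq i) (hw j)
    _ ≤ w j * ((lam * q i / p i) ^ (1 / (1 - ρhat)) / lam * cesDemand (a j) (ρ j) q i) := by
        have := cesDemand_nonneg (ρ := ρ j) (ha j) hq i
        have := hw j
        gcongr
        exact (hρ j).2
    _ = _ := by ring

lemma mul_demand_rpow_le (hw : ∀ j, 0 ≤ w j) (ha : ∀ j k, 0 ≤ a j k)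
    (hρ : ∀ j, 0 ≤ ρ j ∧ ρ j ≤ ρhat) (hρhat : ρhat < 1)
    (hp : ∀ k, 0 < p k) (hq : ∀ k, 0 < q k) (hpq : ∀ k, p k ≤ lam * q k) (i : Fin d) :
    p i * demand w a ρ p i ^ (1 - ρhat) ≤
      lam ^ ρhat * (q i * demand w a ρ q i ^ (1 - ρhat)) := by
  have hκ : 0 < 1 - ρhat := sub_pos.2 hρhat
  have hlam : 0 < lam := pos_of_mul_pos_left ((hp i).trans_le (hpq i)) (hq i).le
  have hratio : 0 ≤ lam * q i / p i := div_nonneg (mul_pos hlam (hq i)).le (hp i).le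
  have hlamρ : lam ^ ρhat = lam / lam ^ (1 - ρhat) := by
    have h := rpow_sub hlam 1 (1 - ρhat)
    rwa [sub_sub_cancel, rpow_one] at h
  calc p i * demand w a ρ p i ^ (1 - ρhat)
      ≤ p i * ((lam * q i / p i) ^ (1 / (1 - ρhat)) / lam * demand w a ρ q i) ^ (1 - ρhat) :=
        mul_le_mul_of_nonneg_left (rpow_le_rpow (demand_nonneg hw ha hp i)
          (demand_le hw ha hρ hρhat hp hq hpq i) hκ.le) (hp i).le
    _ = lam ^ ρhat * (q i * demand w a ρ q i ^ (1 - ρhat)) := by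
        rw [mul_rpow (div_nonneg (rpow_nonneg hratio _) hlam.le) (demand_nonneg hw ha hq i),
          div_rpow (rpow_nonneg hratio _) hlam.le, ← rpow_mul hratio,
          one_div_mul_cancel hκ.ne', rpow_one, hlamρ]
        have := rpow_pos_of_pos hlam (1 - ρhat)
        have := hp i
        field_simp

end Market

theorem fisher_update_nonexpansive_general {n d : ℕ}
    (w : Fin n → ℝ) (hw : ∀ j, 0 < w j)
    (a : Fin n → Fin d → ℝ) (ha : ∀ j, memSimplex (a j))
    (ρ : Fin n → ℝ) (hρ : ∀ j, ρ j ∈ Set.Ioo (0 : ℝ) 1)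
    (pstar : Fin d → ℝ) (hpstarPos : ∀ i, 0 < pstar i)
    (hpstarEq : demand w a ρ pstar = fun _ => 1)
    (rhohat : Fin d → ℝ) (hrhohat : ∀ i, (∀ j, ρ j ≤ rhohat i) ∧ rhohat i < 1)
    (p : Fin d → ℝ) (hp : ∀ i, 0 < p i)
    (I : Finset (Fin d)) :
    dTvec pstar
        (fun i => if i ∈ I then p i * (demand w a ρ p i) ^ (1 - rhohat i) else p i) ≤
      dTvec pstar p := by
  obtain ⟨R, hR0, hR⟩ := exists_dTvec_eq_coe hpstarPos hp
  have hclose := (dTvec_le_coe_iff hpstarPos hp hR0).1 hR.le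
  have hupdate (i : Fin d) : pstar i ≤ exp R * (p i * demand w a ρ p i ^ (1 - rhohat i)) ∧
      p i * demand w a ρ p i ^ (1 - rhohat i) ≤ exp R * pstar i := by
    have hw' j := (hw j).le
    have ha' j := (ha j).1
    have hρ' j : 0 ≤ ρ j ∧ ρ j ≤ rhohat i := ⟨(hρ j).1.le, (hrhohat i).1 j⟩
    have hlower := mul_demand_rpow_le hw' ha' hρ' (hrhohat i).2 hpstarPos hp
      (fun k => (hclose k).1) i
    have hupper := mul_demand_rpow_le hw' ha' hρ' (hrhohat i).2 hp hpstarPos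
      (fun k => (hclose k).2) i
    simp only [hpstarEq, one_rpow, mul_one] at hlower hupper
    have hexp : exp R ^ rhohat i ≤ exp R := by
      rw [← exp_mul, exp_le_exp]
      nlinarith [(hrhohat i).2]
    exact ⟨hlower.trans (mul_le_mul_of_nonneg_right hexp
        (mul_nonneg (hp i).le (rpow_nonneg (demand_nonneg hw' ha' hp i) _))),
      hupper.trans (mul_le_mul_of_nonneg_right hexp (hpstarPos i).le)⟩
  rw [hR]
  refine (dTvec_le_coe_iff hpstarPos (fun i => ?_) hR0).2 fun i => ?_ <;> split_ifs
  · exact pos_of_mul_pos_right ((hpstarPos i).trans_le (hupdate i).1) (exp_pos R).le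
  · exact hp i
  · exact hupdate i
  · exact hclose i

/-- the asynchronous tâtonnement update does not increase the Thompson
distance to the equilibrium prices. -/
theorem fisher_update_nonexpansive {n d : ℕ} (hn : 0 < n)
    (w : Fin n → ℝ) (hw : ∀ j, 0 < w j) (hw1 : ∑ j, w j = 1)
    (a : Fin n → Fin d → ℝ) (ha : ∀ j, memSimplex (a j)) (hapos : ∀ i, 0 < ∑ j, a j i)
    (ρ : Fin n → ℝ) (hρ : ∀ j, ρ j ∈ Set.Ioo (0 : ℝ) 1)
    (pstar : Fin d → ℝ) (hpstarPos : ∀ i, 0 < pstar i)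
    (hpstarEq : demand w a ρ pstar = fun _ => 1)
    (rhohat : Fin d → ℝ) (hrhohat : ∀ i, (∀ j, ρ j ≤ rhohat i) ∧ rhohat i < 1)
    (p : Fin d → ℝ) (hp : ∀ i, 0 < p i)
    (I : Finset (Fin d)) (hI : I.Nonempty) :
    dTvec pstar
        (fun i => if i ∈ I then p i * (demand w a ρ p i) ^ (1 - rhohat i) else p i) ≤
      dTvec pstar p :=
  fisher_update_nonexpansive_general w hw a ha ρ hρ pstar hpstarPos hpstarEq rhohat hrhohat p hp I
end
end
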